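/- Fix points z : Fin n → EuclideanSpace ℝ (Fin d), let C : Matrix (Fin n) (Fin n) ℝ be given by C i j = ‖z i − z j‖², let p₀ : Fin n → ℝ be a probability vector, and let λ ≥ 0. Define d_{W₂}(p, q) = min over Π ∈ M(p, q) of trace(Cᵀ * Π) for probability vectors p, q on Fin n. Then the infimum over all probability vectors p₁ : Fin n → ℝ of d_{W₂}(p₀, p₁) + λ · card(p₁) equals the infimum over Π ∈ S(p₀) of trace(Cᵀ * Π) + λ · card(Πᵀ𝟙). -/

import Mathlib

open Matrix

/-- The set of couplings `M(p, q)`: entrywise-nonnegative matrices with row sums `p`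
and column sums `q`. -/
def couplings {n : ℕ} (p q : Fin n → ℝ) : Set (Matrix (Fin n) (Fin n) ℝ) :=
  {P | (∀ j i, 0 ≤ P j i) ∧ (∀ j, ∑ i, P j i = p j) ∧ (∀ i, ∑ j, P j i = q i)}

/-- The feasible set `S(p₀)`: entrywise-nonnegative matrices with row sums `p₀`. -/
def feasibleSet {n : ℕ} (p₀ : Fin n → ℝ) : Set (Matrix (Fin n) (Fin n) ℝ) :=
  {P | (∀ j i, 0 ≤ P j i) ∧ ∀ j, ∑ i, P j i = p₀ j}

/-! Every `P ∈ S(p₀)` is a coupling of `p₀` with its own column sums `Pᵀ𝟙`, and these column sums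
range exactly over the probability simplex (the product coupling `p₀ p₁ᵀ` realises `p₁`). So
minimising first over `p₁` and then over the couplings in `M(p₀, p₁)` is the same as minimising
over `S(p₀)` grouped by fibres of `P ↦ Pᵀ𝟙`. The cost and the penalty are nonnegative, which keeps
all the infima in `ℝ` meaningful. -/

open Set

theorem csInf_image_fiberwise_add {α β : Type*} {S : Set α} (φ : α → β) (f : α → ℝ) (g : β → ℝ)
    (hf : BddBelow (f '' S)) (hg : BddBelow (g '' (φ '' S))) :
    sInf ((fun b => sInf (f '' {a ∈ S | φ a = b}) + g b) '' (φ '' S)) =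
      sInf ((fun a => f a + g (φ a)) '' S) := by
  rcases S.eq_empty_or_nonempty with rfl | hS
  · simp
  obtain ⟨m, hm⟩ := hf
  obtain ⟨k, hk⟩ := hg
  have hm' {a} (ha : a ∈ S) : m ≤ f a := hm (mem_image_of_mem f ha)
  have hk' {a} (ha : a ∈ S) : k ≤ g (φ a) := hk (mem_image_of_mem g (mem_image_of_mem φ ha))
  have hfiber_ne {a} (ha : a ∈ S) : (f '' {a' ∈ S | φ a' = φ a}).Nonempty :=
    ⟨f a, mem_image_of_mem f ⟨ha, rfl⟩⟩
  have hfiber_bdd (b : β) : BddBelow (f '' {a ∈ S | φ a = b}) :=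
    ⟨m, forall_mem_image.2 fun a ha => hm' ha.1⟩
  have hfiber_le {a} (ha : a ∈ S) : sInf (f '' {a' ∈ S | φ a' = φ a}) ≤ f a :=
    csInf_le (hfiber_bdd _) (mem_image_of_mem f ⟨ha, rfl⟩)
  have hlhs_bdd : BddBelow ((fun b => sInf (f '' {a ∈ S | φ a = b}) + g b) '' (φ '' S)) := by
    refine ⟨m + k, forall_mem_image.2 <| forall_mem_image.2 fun a ha => ?_⟩
    exact add_le_add (le_csInf (hfiber_ne ha) (forall_mem_image.2 fun a' ha' => hm' ha'.1))
      (hk' ha)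
  have hrhs_bdd : BddBelow ((fun a => f a + g (φ a)) '' S) :=
    ⟨m + k, forall_mem_image.2 fun a ha => add_le_add (hm' ha) (hk' ha)⟩
  apply le_antisymm
  · refine le_csInf (hS.image _) (forall_mem_image.2 fun a ha => ?_)
    calc _ ≤ sInf (f '' {a' ∈ S | φ a' = φ a}) + g (φ a) :=
          csInf_le hlhs_bdd (mem_image_of_mem _ (mem_image_of_mem φ ha))
      _ ≤ f a + g (φ a) := by gcongr; exact hfiber_le ha
  · refine le_csInf ((hS.image φ).image _)
      (forall_mem_image.2 <| forall_mem_image.2 fun a ha => ?_)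
    rw [← sub_le_iff_le_add]
    refine le_csInf (hfiber_ne ha) (forall_mem_image.2 fun a' ⟨ha', hφ⟩ => ?_)
    rw [sub_le_iff_le_add, ← hφ]
    exact csInf_le hrhs_bdd (mem_image_of_mem _ ha')

def colSums {n : ℕ} (P : Matrix (Fin n) (Fin n) ℝ) : Fin n → ℝ := fun i => ∑ j, P j i

theorem couplings_eq_sep {n : ℕ} (p q : Fin n → ℝ) :
    couplings p q = {P ∈ feasibleSet p | colSums P = q} := by
  ext P
  simp only [couplings, feasibleSet, colSums, mem_ofPred_eq, funext_iff, and_assoc]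

theorem sum_colSums {n : ℕ} {P : Matrix (Fin n) (Fin n) ℝ} {p : Fin n → ℝ}
    (hP : P ∈ feasibleSet p) :
    ∑ i, colSums P i = ∑ j, p j := by
  simp only [colSums, Finset.sum_comm (f := fun i j => P j i), hP.2]

theorem vecMulVec_mem_feasibleSet {n : ℕ} {p q : Fin n → ℝ} (hp : ∀ j, 0 ≤ p j)
    (hq : q ∈ stdSimplex ℝ (Fin n)) : vecMulVec p q ∈ feasibleSet p :=
  ⟨fun j i => mul_nonneg (hp j) (hq.1 i),
    fun j => by simp [vecMulVec_apply, ← Finset.mul_sum, hq.2]⟩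

theorem colSums_vecMulVec {n : ℕ} {p q : Fin n → ℝ} (hp : ∑ j, p j = 1) :
    colSums (vecMulVec p q) = q := by
  ext i
  simp [colSums, vecMulVec_apply, ← Finset.sum_mul, hp]

theorem colSums_image_feasibleSet {n : ℕ} {p : Fin n → ℝ} (hp : p ∈ stdSimplex ℝ (Fin n)) :
    colSums '' feasibleSet p = stdSimplex ℝ (Fin n) := by
  refine Subset.antisymm ?_ fun q hq =>
    ⟨vecMulVec p q, vecMulVec_mem_feasibleSet hp.1 hq, colSums_vecMulVec hp.2⟩
  rintro _ ⟨P, hP, rfl⟩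
  exact ⟨fun i => Finset.sum_nonneg fun j _ => hP.1 j i, (sum_colSums hP).trans hp.2⟩

theorem trace_transpose_mul_nonneg {m k : Type*} [Fintype m] [Fintype k] {C P : Matrix m k ℝ}
    (hC : ∀ i j, 0 ≤ C i j) (hP : ∀ i j, 0 ≤ P i j) : 0 ≤ trace (Cᵀ * P) :=
  Finset.sum_nonneg fun i _ => Finset.sum_nonneg fun j _ => mul_nonneg (hC j i) (hP j i)

theorem stmt_14 (d n : ℕ) (z : Fin n → EuclideanSpace ℝ (Fin d))
    (C : Matrix (Fin n) (Fin n) ℝ) (hC : ∀ i j, C i j = ‖z i - z j‖ ^ 2)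
    (p₀ : Fin n → ℝ) (hp₀ : ∀ j, 0 ≤ p₀ j) (hsum : ∑ j, p₀ j = 1)
    (lam : ℝ) (hlam : 0 ≤ lam)
    (dW : (Fin n → ℝ) → (Fin n → ℝ) → ℝ)
    (hdW : ∀ p q, dW p q = sInf {v : ℝ | ∃ P ∈ couplings p q, v = Matrix.trace (Cᵀ * P)}) :
    sInf {v : ℝ | ∃ p₁ : Fin n → ℝ, (∀ i, 0 ≤ p₁ i) ∧ (∑ i, p₁ i = 1) ∧
        v = dW p₀ p₁ + lam * ((Finset.univ.filter (fun i : Fin n => p₁ i ≠ 0)).card : ℝ)}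
      = sInf {v : ℝ | ∃ P ∈ feasibleSet p₀,
          v = Matrix.trace (Cᵀ * P) +
            lam * ((Finset.univ.filter (fun i : Fin n => ∑ j, P j i ≠ 0)).card : ℝ)} := by
  set cost := fun P : Matrix (Fin n) (Fin n) ℝ => trace (Cᵀ * P)
  set penalty := fun q : Fin n → ℝ => lam * ((Finset.univ.filter (fun i => q i ≠ 0)).card : ℝ)
  have hcost : ∀ P ∈ feasibleSet p₀, 0 ≤ cost P :=
    fun P hP => trace_transpose_mul_nonneg (fun i j => hC i j ▸ sq_nonneg _) hP.1
  have hdW' (q : Fin n → ℝ) : dW p₀ q = sInf (cost '' {P ∈ feasibleSet p₀ | colSums P = q}) := by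
    rw [hdW, couplings_eq_sep]
    exact congrArg sInf (Set.ext fun v => exists_congr fun P => and_congr_right' eq_comm)
  have hlhs : {v : ℝ | ∃ p₁ : Fin n → ℝ, (∀ i, 0 ≤ p₁ i) ∧ (∑ i, p₁ i = 1) ∧
        v = dW p₀ p₁ + penalty p₁} =
      (fun q => sInf (cost '' {P ∈ feasibleSet p₀ | colSums P = q}) + penalty q) ''
        (colSums '' feasibleSet p₀) := by
    rw [colSums_image_feasibleSet ⟨hp₀, hsum⟩]
    ext v
    simp only [image, stdSimplex, hdW', mem_ofPred_eq, and_assoc, eq_comm]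
  have hrhs : {v : ℝ | ∃ P ∈ feasibleSet p₀, v = cost P + penalty (colSums P)} =
      (fun P => cost P + penalty (colSums P)) '' feasibleSet p₀ := by
    simp only [image, eq_comm]
  rw [hlhs, csInf_image_fiberwise_add colSums cost penalty ⟨0, forall_mem_image.2 hcost⟩
    ⟨0, forall_mem_image.2 fun _ _ => by positivity⟩, ← hrhs]
  rfl
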